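/- Let n ≥ 1, w : {1,…,n} → ℕ, and c ∈ ℕ. Define w̃_j = 2^{n−j} + 2ⁿ·w_j, w̄_j = 2^{n−j}, c̄ = 2ⁿ·c + 2ⁿ − 1, and S = { w̃_j : 1 ≤ j ≤ n } ∪ { w̄_j : 1 ≤ j ≤ n }. Then there exists x : {1,…,n} → {0,1} with Σ_{j=1}^{n} w_j·x_j = c if and only if there exists s : {0,…,n−1} → ℕ with s(i) ∈ S ∪ {0} for all i and Σ_{i=0}^{n−1} s(i) = c̄. In particular, the subset-sum instance (w, c) is a yes-instance if and only if the constructed energy-allocation decision instance (with K = n+1 slots, capacity C = c̄, B₀ = B_K = 0, harvests Q(0) = c̄ and Q(i) = 0 for i ≥ 1, spending set S, identity utility, and utility threshold c̄) is a yes-instance. -/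

import Mathlib

/-- Battery level evolution (in `ℤ`) with unit conversion efficiency and no
leakage: initial level `B₀`, capacity `C`, harvests `Q`, spending vector `s`. -/
def batteryLevelNL (B₀ C : ℕ) (Q : ℕ → ℕ) (s : ℕ → ℕ) : ℕ → ℤ
  | 0 => (B₀ : ℤ)
  | i + 1 => min (batteryLevelNL B₀ C Q s i + (Q i : ℤ) - (s i : ℤ)) (C : ℤ)

/-- Feasibility of a spending vector `s` over horizon `K`, capacity `C`,
initial level `B₀`, final requirement `BK`, harvests `Q`, and
spending-rate set `S`, with no leakage. -/
def FeasibleNL (K C B₀ BK : ℕ) (Q : ℕ → ℕ) (S : Set ℕ) (s : ℕ → ℕ) : Prop :=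
  (∀ i < K, s i ∈ S ∪ {0}) ∧
  (∀ i < K, (s i : ℤ) ≤ batteryLevelNL B₀ C Q s i) ∧
  (∀ i ≤ K, 0 ≤ batteryLevelNL B₀ C Q s i) ∧
  (BK : ℤ) ≤ batteryLevelNL B₀ C Q s K

/-!
Write each slot value as `2 ^ n * h + t` with `t < 2 ^ n` either `0` or a power of two.
Modulo `2 ^ n` the `t`'s must add up to `2 ^ n - 1`, which has `n` binary digits `1`; since the
binary digit sum is subadditive, at most `n` powers of two reach this only if they are pairwise
distinct and add up to exactly `2 ^ n - 1`. Hence each item `j` occupies at most one slot, with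
`w̄_j` or `w̃_j`, and the high parts `h` add up to `c`, which is a subset sum.
In the energy instance the whole budget `c̄` arrives at slot `0` and is only drawn down, so a
feasible schedule of utility `c̄` spends nothing at slot `0` and exactly `c̄` afterwards.
-/

open Finset

namespace Nat

/-- Legendre's formula turns `a ! * b ! ∣ (a + b)!` into subadditivity of the digit sum. -/
theorem digits_sum_add_le {p : ℕ} [Fact p.Prime] (a b : ℕ) :
    (p.digits (a + b)).sum ≤ (p.digits a).sum + (p.digits b).sum := by
  have hv : padicValNat p (a ! * b !) ≤ padicValNat p (a + b)! :=
    (padicValNat_dvd_iff_le (factorial_ne_zero _)).1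
      (pow_padicValNat_dvd.trans (factorial_mul_factorial_dvd_factorial_add a b))
  rw [padicValNat.mul (factorial_ne_zero _) (factorial_ne_zero _)] at hv
  have hmul := Nat.mul_le_mul_left (p - 1) hv
  rw [mul_add, sub_one_mul_padicValNat_factorial, sub_one_mul_padicValNat_factorial,
    sub_one_mul_padicValNat_factorial] at hmul
  have := digit_sum_le p a
  have := digit_sum_le p b
  have := digit_sum_le p (a + b)
  omega

theorem digits_sum_sum_le {ι : Type*} {p : ℕ} [Fact p.Prime] (s : Finset ι) (f : ι → ℕ) :
    (p.digits (∑ i ∈ s, f i)).sum ≤ ∑ i ∈ s, (p.digits (f i)).sum := by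
  classical
  induction s using Finset.induction_on with
  | empty => simp
  | insert a s ha ih =>
    rw [sum_insert ha, sum_insert ha]
    exact (digits_sum_add_le _ _).trans (Nat.add_le_add_left ih _)

theorem digits_sum_base_pow {p : ℕ} (hp : 1 < p) (k : ℕ) : (p.digits (p ^ k)).sum = 1 := by
  rw [← mul_one (p ^ k), digits_base_pow_mul hp one_pos, digits_of_lt p 1 one_ne_zero hp]
  simp

theorem digits_sum_pos {p m : ℕ} (hm : m ≠ 0) : 0 < (p.digits m).sum :=
  List.sum_pos_iff_exists_pos_nat.2
    ⟨_, List.getLast_mem _, Nat.pos_of_ne_zero (getLast_digit_ne_zero p hm)⟩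

theorem digits_two_sum_two_pow_mul_add (n q : ℕ) :
    (digits 2 (2 ^ n * q + (2 ^ n - 1))).sum = n + (digits 2 q).sum := by
  induction n with
  | zero => simp
  | succ n ih =>
    have h : 2 ^ (n + 1) * q + (2 ^ (n + 1) - 1) = 1 + 2 * (2 ^ n * q + (2 ^ n - 1)) := by
      have : 1 ≤ 2 ^ n := Nat.one_le_two_pow
      rw [pow_succ, Nat.mul_comm (2 ^ n) 2, Nat.mul_assoc]
      omega
    rw [h, digits_add 2 one_lt_two 1 _ one_lt_two (Or.inl one_ne_zero), List.sum_cons, ih]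
    omega

end Nat

section TwoPowSums

variable {ι : Type*} (s : Finset ι) (e : ι → ℕ)

theorem digits_two_sum_sum_two_pow_le_card :
    (Nat.digits 2 (∑ i ∈ s, 2 ^ e i)).sum ≤ #s := by
  calc _ ≤ ∑ i ∈ s, (Nat.digits 2 (2 ^ e i)).sum := Nat.digits_sum_sum_le s _
    _ = #s := by simp only [Nat.digits_sum_base_pow one_lt_two, sum_const, smul_eq_mul, mul_one]

/-- Two equal powers of two merge into one, losing a binary digit. -/
theorem digits_two_sum_sum_two_pow_lt_card (h : ¬ Set.InjOn e s) :
    (Nat.digits 2 (∑ i ∈ s, 2 ^ e i)).sum < #s := by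
  classical
  obtain ⟨i, hi, i', hi', he, hne⟩ : ∃ i ∈ s, ∃ i' ∈ s, e i = e i' ∧ i ≠ i' := by
    simpa [Set.InjOn] using h
  have hi'' : i' ∈ s.erase i := mem_erase.2 ⟨hne.symm, hi'⟩
  have hcard : #s = #((s.erase i).erase i') + 2 := by
    rw [card_erase_of_mem hi'', card_erase_of_mem hi]
    have := one_lt_card.2 ⟨i, hi, i', hi', hne⟩
    omega
  rw [← add_sum_erase s _ hi, ← add_sum_erase _ _ hi'', ← add_assoc, he, ← two_mul,
    ← pow_succ']
  calc _ ≤ (Nat.digits 2 (2 ^ (e i' + 1))).sum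
        + (Nat.digits 2 (∑ x ∈ (s.erase i).erase i', 2 ^ e x)).sum :=
        Nat.digits_sum_add_le _ _
    _ ≤ 1 + #((s.erase i).erase i') := by
      rw [Nat.digits_sum_base_pow one_lt_two]
      exact Nat.add_le_add_left (digits_two_sum_sum_two_pow_le_card _ _) _
    _ < #s := by omega

variable {s e}

theorem sum_two_pow_eq_and_injOn_of_mod_eq {n : ℕ} (hs : #s ≤ n)
    (hmod : (∑ i ∈ s, 2 ^ e i) % 2 ^ n = 2 ^ n - 1) :
    ∑ i ∈ s, 2 ^ e i = 2 ^ n - 1 ∧ Set.InjOn e s := by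
  set T := ∑ i ∈ s, 2 ^ e i
  have hT : T = 2 ^ n * (T / 2 ^ n) + (2 ^ n - 1) :=
    hmod ▸ (Nat.div_add_mod T (2 ^ n)).symm
  have hdigits : (Nat.digits 2 T).sum = n + (Nat.digits 2 (T / 2 ^ n)).sum := by
    rw [← Nat.digits_two_sum_two_pow_mul_add, ← hT]
  have hle : (Nat.digits 2 T).sum ≤ #s := digits_two_sum_sum_two_pow_le_card s e
  refine ⟨?_, ?_⟩
  · have hq : T / 2 ^ n = 0 := by
      by_contra hq
      have := Nat.digits_sum_pos (p := 2) hq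
      omega
    rw [hT, hq, mul_zero, zero_add]
  · by_contra hinj
    have : (Nat.digits 2 T).sum < #s := digits_two_sum_sum_two_pow_lt_card s e hinj
    omega

end TwoPowSums

theorem exists_zero_or_one_sum_mul_eq_of_injOn {ι κ : Type*} {I : Finset ι} {t : Finset κ}
    {j : ι → κ} {y : ι → ℕ} (hj : ∀ i ∈ I, j i ∈ t) (hinj : Set.InjOn j I)
    (hy : ∀ i ∈ I, y i ≤ 1) (w : κ → ℕ) :
    ∃ x : κ → ℕ, (∀ k, x k = 0 ∨ x k = 1) ∧
      ∑ k ∈ t, w k * x k = ∑ i ∈ I, w (j i) * y i := by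
  classical
  refine ⟨fun k => ∑ i ∈ I with j i = k, y i, fun k => ?_, ?_⟩
  · have hfiber : #{i ∈ I | j i = k} ≤ 1 := card_le_one.2 fun a ha b hb => by
      simp only [mem_filter] at ha hb
      exact hinj ha.1 hb.1 (ha.2.trans hb.2.symm)
    have : ∑ i ∈ I with j i = k, y i ≤ 1 :=
      calc _ ≤ #{i ∈ I | j i = k} • 1 :=
            sum_le_card_nsmul _ _ 1 fun i hi => hy i (mem_filter.1 hi).1
        _ ≤ 1 := by simpa using hfiber
    dsimp only
    omega
  · simp only [mul_sum]
    rw [← sum_fiberwise_of_maps_to hj]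
    exact sum_congr rfl fun k _ => sum_congr rfl fun i hi => by rw [(mem_filter.1 hi).2]

def spendingSet (n : ℕ) (w : ℕ → ℕ) : Finset ℕ :=
  (Icc 1 n).image (fun j => 2 ^ (n - j) + 2 ^ n * w j) ∪ (Icc 1 n).image (fun j => 2 ^ (n - j))

theorem mem_spendingSet_iff {n v : ℕ} {w : ℕ → ℕ} :
    v ∈ spendingSet n w ↔
      ∃ j ∈ Icc 1 n, ∃ y ≤ 1, v = 2 ^ (n - j) + 2 ^ n * (w j * y) := by
  simp only [spendingSet, mem_union, mem_image]
  constructor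
  · rintro (⟨j, hj, rfl⟩ | ⟨j, hj, rfl⟩)
    · exact ⟨j, hj, 1, le_rfl, by rw [mul_one]⟩
    · exact ⟨j, hj, 0, Nat.zero_le _, by rw [mul_zero, mul_zero, add_zero]⟩
  · rintro ⟨j, hj, y, hy, rfl⟩
    interval_cases y
    · exact Or.inr ⟨j, hj, by rw [mul_zero, mul_zero, add_zero]⟩
    · exact Or.inl ⟨j, hj, by rw [mul_one]⟩

theorem exists_slots_of_subset_sum {n c : ℕ} {w x : ℕ → ℕ}
    (hx : ∀ j ∈ Icc 1 n, x j = 0 ∨ x j = 1) (hsum : ∑ j ∈ Icc 1 n, w j * x j = c) :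
    ∃ s : ℕ → ℕ, (∀ i < n, s i ∈ (↑(spendingSet n w) : Set ℕ) ∪ {0}) ∧
      ∑ i ∈ range n, s i = 2 ^ n * c + 2 ^ n - 1 := by
  refine ⟨fun i => 2 ^ (n - (i + 1)) + 2 ^ n * (w (i + 1) * x (i + 1)),
    fun i hi => Or.inl ?_, ?_⟩
  · have hmem : i + 1 ∈ Icc 1 n := mem_Icc.2 ⟨by omega, by omega⟩
    have hx1 : x (i + 1) ≤ 1 := by rcases hx _ hmem with h | h <;> omega
    exact mem_spendingSet_iff.2 ⟨i + 1, hmem, x (i + 1), hx1, rfl⟩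
  · have hgeom : ∑ i ∈ range n, 2 ^ (n - (i + 1)) = 2 ^ n - 1 := by
      calc _ = ∑ i ∈ range n, 2 ^ (n - 1 - i) :=
            sum_congr rfl fun i _ => by rw [Nat.sub_sub, add_comm]
        _ = ∑ i ∈ range n, 2 ^ i := sum_range_reflect (2 ^ ·) n
        _ = 2 ^ n - 1 := by simpa using Nat.geomSum_eq le_rfl n
    have hshift : ∑ i ∈ range n, w (i + 1) * x (i + 1) = c := by
      rw [← hsum, range_eq_Ico, sum_Ico_add' (fun j => w j * x j) 0 n 1]
      rfl
    have : 1 ≤ 2 ^ n := Nat.one_le_two_pow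
    rw [sum_add_distrib, ← mul_sum, hgeom, hshift]
    omega

theorem exists_subset_sum_of_slots {n c : ℕ} {w s : ℕ → ℕ}
    (hs : ∀ i < n, s i ∈ (↑(spendingSet n w) : Set ℕ) ∪ {0})
    (hsum : ∑ i ∈ range n, s i = 2 ^ n * c + 2 ^ n - 1) :
    ∃ x : ℕ → ℕ, (∀ j ∈ Icc 1 n, x j = 0 ∨ x j = 1) ∧
      ∑ j ∈ Icc 1 n, w j * x j = c := by
  classical
  set I := {i ∈ range n | s i ≠ 0}
  have hslot :
      ∀ i ∈ I, ∃ j ∈ Icc 1 n, ∃ y ≤ 1, s i = 2 ^ (n - j) + 2 ^ n * (w j * y) := by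
    intro i hi
    obtain ⟨hin, hne⟩ := mem_filter.1 hi
    exact mem_spendingSet_iff.1 ((hs i (mem_range.1 hin)).resolve_right hne)
  choose! j hj y hy hsj using hslot
  have hsplit :
      ∑ i ∈ range n, s i = 2 ^ n * ∑ i ∈ I, w (j i) * y i + ∑ i ∈ I, 2 ^ (n - j i) := by
    rw [← sum_filter_ne_zero, sum_congr rfl hsj, sum_add_distrib, mul_sum, add_comm]
  have hpos : 0 < 2 ^ n := Nat.two_pow_pos n
  have hmod : (∑ i ∈ I, 2 ^ (n - j i)) % 2 ^ n = 2 ^ n - 1 := by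
    have hrepr : 2 ^ n * ∑ i ∈ I, w (j i) * y i + ∑ i ∈ I, 2 ^ (n - j i)
        = 2 ^ n * c + (2 ^ n - 1) := by omega
    rw [← Nat.mul_add_mod_self_left, hrepr, Nat.mul_add_mod_self_left,
      Nat.mod_eq_of_lt (Nat.sub_lt hpos one_pos)]
  obtain ⟨hT, hinj⟩ : ∑ i ∈ I, 2 ^ (n - j i) = 2 ^ n - 1 ∧ Set.InjOn (n - j ·) I :=
    sum_two_pow_eq_and_injOn_of_mod_eq ((card_filter_le _ _).trans (card_range n).le) hmod
  have hc : ∑ i ∈ I, w (j i) * y i = c := Nat.eq_of_mul_eq_mul_left hpos (by omega)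
  obtain ⟨x, hx, hxsum⟩ := exists_zero_or_one_sum_mul_eq_of_injOn hj
    (fun a ha b hb h => hinj ha hb (by simp only [h])) hy w
  exact ⟨x, fun k _ => hx k, hxsum.trans hc⟩

theorem batteryLevelNL_single_harvest {C : ℕ} {Q : ℕ → ℕ} (hQ0 : Q 0 = C)
    (hQ : ∀ i, 1 ≤ i → Q i = 0) (s : ℕ → ℕ) (i : ℕ) :
    batteryLevelNL 0 C Q s (i + 1) = C - ((∑ k ∈ range (i + 1), s k : ℕ) : ℤ) := by
  induction i with
  | zero => simp [batteryLevelNL, hQ0]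
  | succ i ih =>
    show min (batteryLevelNL 0 C Q s (i + 1) + (Q (i + 1) : ℤ) - s (i + 1)) (C : ℤ) = _
    rw [ih, hQ _ (by omega), sum_range_succ _ (i + 1), min_eq_left (by omega)]
    push_cast
    ring

theorem feasibleNL_single_harvest_iff {n C : ℕ} {Q : ℕ → ℕ} (hQ0 : Q 0 = C)
    (hQ : ∀ i, 1 ≤ i → Q i = 0) (S : Set ℕ) (s : ℕ → ℕ) :
    (FeasibleNL (n + 1) C 0 0 Q S s ∧ C ≤ ∑ i ∈ range (n + 1), s i) ↔
      s 0 = 0 ∧ (∀ i < n + 1, s i ∈ S ∪ {0}) ∧ ∑ i ∈ range (n + 1), s i = C := by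
  have hB := batteryLevelNL_single_harvest hQ0 hQ s
  constructor
  · rintro ⟨⟨hmem, hspend, -, hfinal⟩, hC⟩
    have hs0 : s 0 = 0 := by simpa [batteryLevelNL] using hspend 0 n.succ_pos
    refine ⟨hs0, hmem, le_antisymm ?_ hC⟩
    have := hB n ▸ hfinal
    omega
  · rintro ⟨hs0, hmem, hsum⟩
    have hpartial : ∀ k ≤ n + 1, ∑ i ∈ range k, s i ≤ C := fun k hk =>
      hsum ▸ sum_le_sum_of_subset (range_subset_range.2 hk)
    refine ⟨⟨hmem, fun i hi => ?_, fun i hi => ?_, ?_⟩, hsum.ge⟩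
    · cases i with
      | zero => simp [batteryLevelNL, hs0]
      | succ k =>
        have := hpartial (k + 2) hi
        rw [sum_range_succ _ (k + 1)] at this
        rw [hB]
        omega
    · cases i with
      | zero => simp [batteryLevelNL]
      | succ k =>
        have := hpartial (k + 1) hi
        rw [hB]
        omega
    · have := hpartial (n + 1) le_rfl
      rw [hB]
      omega

theorem exists_slots_iff_exists_shift {n C : ℕ} {S : Set ℕ} :
    (∃ s : ℕ → ℕ, (∀ i < n, s i ∈ S ∪ {0}) ∧ ∑ i ∈ range n, s i = C) ↔
      ∃ s : ℕ → ℕ, s 0 = 0 ∧ (∀ i < n + 1, s i ∈ S ∪ {0}) ∧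
        ∑ i ∈ range (n + 1), s i = C := by
  constructor
  · rintro ⟨s, hmem, hsum⟩
    refine ⟨fun | 0 => 0 | i + 1 => s i, rfl, fun i hi => ?_, ?_⟩
    · cases i with
      | zero => exact Or.inr rfl
      | succ i => exact hmem i (by omega)
    · rw [sum_range_succ']
      simpa using hsum
  · rintro ⟨s, hs0, hmem, hsum⟩
    refine ⟨fun i => s (i + 1), fun i hi => hmem (i + 1) (by omega), ?_⟩
    rwa [sum_range_succ', hs0, add_zero] at hsum

theorem subset_sum_iff_energy_allocation_general
    (n : ℕ) (w : ℕ → ℕ) (c : ℕ)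
    (cbar : ℕ) (hcbar : cbar = 2 ^ n * c + 2 ^ n - 1)
    (S : Finset ℕ)
    (hS : S = (Finset.Icc 1 n).image (fun j => 2 ^ (n - j) + 2 ^ n * w j) ∪
              (Finset.Icc 1 n).image (fun j => 2 ^ (n - j)))
    (Q : ℕ → ℕ) (hQ0 : Q 0 = cbar) (hQ : ∀ i, 1 ≤ i → Q i = 0) :
    ((∃ x : ℕ → ℕ, (∀ j ∈ Finset.Icc 1 n, x j = 0 ∨ x j = 1) ∧
        ∑ j ∈ Finset.Icc 1 n, w j * x j = c) ↔
      (∃ s : ℕ → ℕ, (∀ i < n, s i ∈ (↑S : Set ℕ) ∪ {0}) ∧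
        ∑ i ∈ Finset.range n, s i = cbar)) ∧
    ((∃ x : ℕ → ℕ, (∀ j ∈ Finset.Icc 1 n, x j = 0 ∨ x j = 1) ∧
        ∑ j ∈ Finset.Icc 1 n, w j * x j = c) ↔
      (∃ s : ℕ → ℕ, FeasibleNL (n + 1) cbar 0 0 Q (↑S) s ∧
        cbar ≤ ∑ i ∈ Finset.range (n + 1), s i)) := by
  have hslots : (∃ x : ℕ → ℕ, (∀ j ∈ Icc 1 n, x j = 0 ∨ x j = 1) ∧
      ∑ j ∈ Icc 1 n, w j * x j = c) ↔
      ∃ s : ℕ → ℕ, (∀ i < n, s i ∈ (↑S : Set ℕ) ∪ {0}) ∧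
        ∑ i ∈ range n, s i = cbar := by
    rw [hcbar, show S = spendingSet n w from hS]
    exact ⟨fun ⟨_, hx, hsum⟩ => exists_slots_of_subset_sum hx hsum,
      fun ⟨_, hs, hsum⟩ => exists_subset_sum_of_slots hs hsum⟩
  refine ⟨hslots, hslots.trans (exists_slots_iff_exists_shift.trans ?_)⟩
  exact exists_congr fun s => (feasibleNL_single_harvest_iff hQ0 hQ _ s).symm

/-- The core of the NP-hardness reduction: the subset-sum instance `(w, c)` is
a yes-instance iff `n` slots can be filled with values from `S ∪ {0}` summing
to `c̄`, where `S = {w̃_j} ∪ {w̄_j}` with `w̃_j = 2^{n−j} + 2ⁿ·w_j`,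
`w̄_j = 2^{n−j}`, and `c̄ = 2ⁿ·c + 2ⁿ − 1`; and, in particular, iff the
constructed energy-allocation decision instance (with `K = n+1`, `C = c̄`,
`B₀ = B_K = 0`, `Q(0) = c̄`, `Q(i) = 0` for `i ≥ 1`, identity utility,
threshold `c̄`) is a yes-instance. -/
theorem subset_sum_iff_energy_allocation
    (n : ℕ) (hn : 1 ≤ n) (w : ℕ → ℕ) (c : ℕ)
    (cbar : ℕ) (hcbar : cbar = 2 ^ n * c + 2 ^ n - 1)
    (S : Finset ℕ)
    (hS : S = (Finset.Icc 1 n).image (fun j => 2 ^ (n - j) + 2 ^ n * w j) ∪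
              (Finset.Icc 1 n).image (fun j => 2 ^ (n - j)))
    (Q : ℕ → ℕ) (hQ0 : Q 0 = cbar) (hQ : ∀ i, 1 ≤ i → Q i = 0) :
    ((∃ x : ℕ → ℕ, (∀ j ∈ Finset.Icc 1 n, x j = 0 ∨ x j = 1) ∧
        ∑ j ∈ Finset.Icc 1 n, w j * x j = c) ↔
      (∃ s : ℕ → ℕ, (∀ i < n, s i ∈ (↑S : Set ℕ) ∪ {0}) ∧
        ∑ i ∈ Finset.range n, s i = cbar)) ∧
    ((∃ x : ℕ → ℕ, (∀ j ∈ Finset.Icc 1 n, x j = 0 ∨ x j = 1) ∧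
        ∑ j ∈ Finset.Icc 1 n, w j * x j = c) ↔
      (∃ s : ℕ → ℕ, FeasibleNL (n + 1) cbar 0 0 Q (↑S) s ∧
        cbar ≤ ∑ i ∈ Finset.range (n + 1), s i)) :=
  subset_sum_iff_energy_allocation_general n w c cbar hcbar S hS Q hQ0 hQ
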